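/- arXiv:1506.02649 — 2 statements merged into one kernel-verified Lean document; each statement's English description precedes it below -/
import Mathlib

section
/- In the setting of conditioned SGD, assume the correlation matrix C = (1/m) Σ_{i=1}^m x_i x_iᵀ is positive definite, and run the algorithm with the conditioner A = C^{1/2} (the positive definite square root of C) and learning rate η = σ/(ρ√T), where σ ≥ ‖W*‖_spectral. Then E[L(W̄) − L(W*)] ≤ (σρ/√T) · tr(C^{1/2}). -/
/-!
Let `D_t = tr((W_t - W*) A (W_t - W*)ᵀ)`. Expanding the square in one step of conditioned SGD,
together with the subgradient inequality and `‖g_t‖ ≤ ρ`, gives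
`2η (ℓ(W_t x) - ℓ(W* x)) ≤ D_t - D_{t+1} + η² ρ² xᵀ A⁻¹ x`, where `x = x_{i_t}`.
Telescoping, `D_{T+1} ≥ 0` and `D_1 = tr(W* A W*ᵀ) ≤ σ² tr A` bound the sum over all steps.
Since `i_t` is uniform and independent of `W_t`, in expectation the loss terms become
`L(W_t) - L(W*)` and `xᵀ A⁻¹ x` becomes `tr(A⁻¹ C) = tr A`. Jensen's inequality for the
convex `L` and `T η² ρ² = σ²` then give the bound.
-/

open Matrix BigOperators

theorem Real.le_sq_mul_of_sqrt_le_mul_sqrt {a b c : ℝ} (ha : 0 ≤ a) (hb : 0 ≤ b)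
    (h : √a ≤ c * √b) : a ≤ c ^ 2 * b := by
  calc a = √a ^ 2 := (Real.sq_sqrt ha).symm
    _ ≤ (c * √b) ^ 2 := pow_le_pow_left₀ (Real.sqrt_nonneg a) h 2
    _ = c ^ 2 * b := by rw [mul_pow, Real.sq_sqrt hb]

namespace Matrix

variable {R : Type*} [CommRing R] {κ ν : Type*} [Fintype κ] [Fintype ν]

theorem dotProduct_self_eq_sum_sq (v : ν → R) : v ⬝ᵥ v = ∑ i, v i ^ 2 := by
  simp only [dotProduct, sq]

theorem dotProduct_mulVec_self_le_of_sqrt_le {W : Matrix κ ν ℝ} {σ : ℝ}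
    (hσ : ∀ v, √(∑ j, (W *ᵥ v) j ^ 2) ≤ σ * √(∑ i, v i ^ 2)) (v : ν → ℝ) :
    (W *ᵥ v) ⬝ᵥ (W *ᵥ v) ≤ σ ^ 2 * (v ⬝ᵥ v) := by
  simpa only [dotProduct_self_eq_sum_sq] using
    Real.le_sq_mul_of_sqrt_le_mul_sqrt (by positivity) (by positivity) (hσ v)

theorem dotProduct_mulVec_self_eq_trace_mul_vecMulVec (B : Matrix ν ν R) (x : ν → R) :
    x ⬝ᵥ (B *ᵥ x) = (B * vecMulVec x x).trace := by
  rw [mul_vecMulVec, trace_vecMulVec, dotProduct_comm]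

theorem trace_mul_vecMulVec_mul_transpose (W : Matrix κ ν R) (v : ν → R) :
    (W * vecMulVec v v * Wᵀ).trace = (W *ᵥ v) ⬝ᵥ (W *ᵥ v) := by
  rw [mul_vecMulVec, vecMulVec_mul, vecMul_transpose, trace_vecMulVec]

theorem trace_sub_smul_vecMulVec_mul_mul_transpose {A : Matrix ν ν R} (hA : A.IsSymm)
    (Δ : Matrix κ ν R) (η : R) (g : κ → R) (u : ν → R) :
    ((Δ - η • vecMulVec g u) * A * (Δ - η • vecMulVec g u)ᵀ).trace
      = (Δ * A * Δᵀ).trace - 2 * η * (g ⬝ᵥ (Δ *ᵥ (A *ᵥ u)))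
        + η ^ 2 * (g ⬝ᵥ g) * (u ⬝ᵥ (A *ᵥ u)) := by
  have cross : (Δ * A * (vecMulVec g u)ᵀ).trace = g ⬝ᵥ (Δ *ᵥ (A *ᵥ u)) := by
    rw [transpose_vecMulVec, Matrix.mul_assoc, mul_vecMulVec, mul_vecMulVec, trace_vecMulVec,
      dotProduct_comm]
  have cross' : (vecMulVec g u * A * Δᵀ).trace = g ⬝ᵥ (Δ *ᵥ (A *ᵥ u)) := by
    rw [← trace_transpose, transpose_mul, transpose_mul, transpose_transpose, hA.eq,
      ← Matrix.mul_assoc, cross]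
  have square :
      (vecMulVec g u * A * (vecMulVec g u)ᵀ).trace = (g ⬝ᵥ g) * (u ⬝ᵥ (A *ᵥ u)) := by
    rw [transpose_vecMulVec, Matrix.mul_assoc, mul_vecMulVec, vecMulVec_mul_vecMulVec,
      trace_vecMulVec, dotProduct_smul, smul_eq_mul, dotProduct_comm u, mul_comm]
  simp only [transpose_sub, transpose_smul, Matrix.sub_mul, Matrix.mul_sub, Matrix.smul_mul,
    Matrix.mul_smul, trace_sub, trace_smul, smul_eq_mul, cross, cross', square]
  ring

theorem PosSemidef.trace_mul_mul_transpose_le {A : Matrix ν ν ℝ} (hA : A.PosSemidef)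
    {W : Matrix κ ν ℝ} {c : ℝ} (hW : ∀ v, (W *ᵥ v) ⬝ᵥ (W *ᵥ v) ≤ c * (v ⬝ᵥ v)) :
    (W * A * Wᵀ).trace ≤ c * A.trace := by
  obtain ⟨k, v, rfl⟩ := posSemidef_iff_eq_sum_vecMulVec.mp hA
  simp only [star_trivial, Matrix.mul_sum, Matrix.sum_mul, trace_sum,
    trace_mul_vecMulVec_mul_transpose, trace_vecMulVec, Finset.mul_sum]
  exact Finset.sum_le_sum fun i _ => hW (v i)

theorem trace_eq_mul_sum_dotProduct_inv_mulVec {K ι : Type*} [Field K] [Fintype ι]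
    [DecidableEq ν] {A : Matrix ν ν K} (hA : IsUnit A.det) {c : K}
    {x : ι → ν → K} (hAsq : A * A = c • ∑ i, vecMulVec (x i) (x i)) :
    A.trace = c * ∑ i, x i ⬝ᵥ (A⁻¹ *ᵥ x i) := by
  calc A.trace = (A⁻¹ * (A * A)).trace :=
      congrArg trace (nonsing_inv_mul_cancel_left A A hA).symm
    _ = c * ∑ i, x i ⬝ᵥ (A⁻¹ *ᵥ x i) := by
      simp only [hAsq, Matrix.mul_smul, trace_smul, Matrix.mul_sum, trace_sum, smul_eq_mul,
        dotProduct_mulVec_self_eq_trace_mul_vecMulVec]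

end Matrix

theorem dotProduct_self_le_sq_of_subgradient {κ : Type*} [Fintype κ] {f : (κ → ℝ) → ℝ}
    {ρ : ℝ} (hf : ∀ u v, |f u - f v| ≤ ρ * √(∑ j, (u j - v j) ^ 2)) {y g : κ → ℝ}
    (hg : ∀ u, f y + g ⬝ᵥ (u - y) ≤ f u) : g ⬝ᵥ g ≤ ρ ^ 2 := by
  have hsq : √(g ⬝ᵥ g) ^ 2 = g ⬝ᵥ g := Real.sq_sqrt (dotProduct_self_star_nonneg g)
  have hle : g ⬝ᵥ g ≤ ρ * √(g ⬝ᵥ g) := by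
    have h1 := hg (y + g)
    have h2 := hf (y + g) y
    simp only [Pi.add_apply, add_sub_cancel_left, ← dotProduct_self_eq_sum_sq] at h1 h2
    linarith [le_abs_self (f (y + g) - f y)]
  nlinarith [Real.sqrt_nonneg (g ⬝ᵥ g)]

theorem convexOn_of_eq_mean_comp_mulVec {κ ν : Type*} [Fintype ν] {m : ℕ}
    {ℓ : Fin m → (κ → ℝ) → ℝ} (hconv : ∀ i, ConvexOn ℝ Set.univ (ℓ i)) {x : Fin m → ν → ℝ}
    {L : Matrix κ ν ℝ → ℝ} (hL : ∀ W, L W = (1 / (m : ℝ)) * ∑ i, ℓ i (W *ᵥ x i)) :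
    ConvexOn ℝ Set.univ L := by
  refine ⟨convex_univ, fun X _ Y _ a b ha hb hab => ?_⟩
  have hi : ∀ i, ℓ i ((a • X + b • Y) *ᵥ x i) ≤ a * ℓ i (X *ᵥ x i) + b * ℓ i (Y *ᵥ x i) :=
    fun i => by
      simpa only [add_mulVec, smul_mulVec, smul_eq_mul] using
        (hconv i).2 trivial trivial ha hb hab
  calc L (a • X + b • Y)
      ≤ (1 / (m : ℝ)) * ∑ i, (a * ℓ i (X *ᵥ x i) + b * ℓ i (Y *ᵥ x i)) := by
        rw [hL]
        gcongr with i
        exact hi i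
    _ = a • L X + b • L Y := by
        rw [hL, hL, Finset.sum_add_distrib, ← Finset.mul_sum, ← Finset.mul_sum, smul_eq_mul,
          smul_eq_mul]
        ring

theorem ConvexOn.map_inv_smul_sum_le {E : Type*} [AddCommGroup E] [Module ℝ E] {f : E → ℝ}
    (hf : ConvexOn ℝ Set.univ f) {T : ℕ} (hT : 0 < T) (p : Fin T → E) :
    f ((T : ℝ)⁻¹ • ∑ t, p t) ≤ (T : ℝ)⁻¹ * ∑ t, f (p t) := by
  have hw : ∑ _t : Fin T, (T : ℝ)⁻¹ = 1 := by simp [hT.ne']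
  simpa [Finset.smul_sum, Finset.mul_sum] using
    hf.map_sum_le (fun _ _ => by positivity) hw fun _ _ => Set.mem_univ (p _)

/-- With `ω` uniform on `ι → α` this says `E[G ω (ω t)] = E[mean_a G ω a]`: the coordinate `ω t`
is independent of `G ω`. -/
theorem card_nsmul_sum_apply_eval_eq_sum_sum {ι α M : Type*} [Fintype ι] [DecidableEq ι]
    [Fintype α] [AddCommMonoid M] (t : ι) (G : (ι → α) → α → M)
    (hG : ∀ ω ω', (∀ s ≠ t, ω s = ω' s) → G ω = G ω') :
    Fintype.card α • ∑ ω, G ω (ω t) = ∑ ω, ∑ a, G ω a := by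
  set e := Equiv.piSplitAt t fun _ : ι => α
  have he : ∀ a b r, G (e.symm (a, r)) = G (e.symm (b, r)) := fun a b r =>
    hG _ _ fun s hs => by simp [e, Equiv.piSplitAt_symm_apply, hs]
  have heval : ∀ a r, e.symm (a, r) t = a := by simp [e, Equiv.piSplitAt_symm_apply]
  rw [← e.symm.sum_comp, ← e.symm.sum_comp]
  simp only [Fintype.sum_prod_type, heval]
  calc Fintype.card α • ∑ a, ∑ r, G (e.symm (a, r)) a
      = ∑ c : α, ∑ r, ∑ a, G (e.symm (a, r)) a := by
        rw [Finset.sum_const, Finset.card_univ, Finset.sum_comm]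
    _ = ∑ c : α, ∑ r, ∑ a, G (e.symm (c, r)) a :=
        Finset.sum_congr rfl fun c _ => Finset.sum_congr rfl fun r _ =>
          Finset.sum_congr rfl fun a _ => congrFun (he a c r) a

section Recursion

variable {α β : Type*} {T : ℕ} (step : β → α → β) (w₀ : β) {W : (Fin T → α) → ℕ → β}

theorem eq_of_forall_lt_eq_of_recursion (hW0 : ∀ ω, W ω 0 = w₀)
    (hW : ∀ ω (t : Fin T), W ω (t + 1) = step (W ω t) (ω t)) :
    ∀ k ≤ T, ∀ ω ω' : Fin T → α, (∀ s : Fin T, (s : ℕ) < k → ω s = ω' s) →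
      W ω k = W ω' k := by
  intro k
  induction k with
  | zero => intro _ ω ω' _; rw [hW0, hW0]
  | succ k ih =>
    intro hk ω ω' hagree
    have hprev := ih (by omega) ω ω' fun s hs => hagree s (by omega)
    rw [hW ω ⟨k, hk⟩, hW ω' ⟨k, hk⟩, hprev, hagree ⟨k, hk⟩ (by simp)]

theorem eq_of_recursion_of_step_eq_self (hW0 : ∀ ω, W ω 0 = w₀)
    (hW : ∀ ω (t : Fin T), W ω (t + 1) = step (W ω t) (ω t)) (hstep : ∀ b a, step b a = b) :
    ∀ ω, ∀ k ≤ T, W ω k = w₀ := by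
  intro ω k
  induction k with
  | zero => exact fun _ => hW0 ω
  | succ k ih => exact fun hk => by rw [hW ω ⟨k, hk⟩, hstep, ih (by omega)]

end Recursion

section SGD

variable {κ ν : Type*} [Fintype κ] [Fintype ν] [DecidableEq ν]

theorem sgd_step_le_potential_sub {f : (κ → ℝ) → ℝ} {A : Matrix ν ν ℝ} (hA : A.PosDef)
    {η ρ : ℝ} (hη : 0 ≤ η) (M Mstar : Matrix κ ν ℝ) {x : ν → ℝ} {g : κ → ℝ}
    (hg : ∀ u, f (M *ᵥ x) + g ⬝ᵥ (u - M *ᵥ x) ≤ f u) (hgρ : g ⬝ᵥ g ≤ ρ ^ 2) :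
    2 * η * (f (M *ᵥ x) - f (Mstar *ᵥ x)) - η ^ 2 * ρ ^ 2 * (x ⬝ᵥ (A⁻¹ *ᵥ x))
      ≤ ((M - Mstar) * A * (M - Mstar)ᵀ).trace
        - ((M - η • vecMulVec g (A⁻¹ *ᵥ x) - Mstar) * A
            * (M - η • vecMulVec g (A⁻¹ *ᵥ x) - Mstar)ᵀ).trace := by
  have hAu : A *ᵥ (A⁻¹ *ᵥ x) = x := by
    rw [mulVec_mulVec, mul_nonsing_inv _ hA.det_pos.ne'.isUnit, one_mulVec]
  have hsymm : A.IsSymm := isHermitian_iff_isSymm.mp hA.isHermitian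
  rw [show M - η • vecMulVec g (A⁻¹ *ᵥ x) - Mstar
      = (M - Mstar) - η • vecMulVec g (A⁻¹ *ᵥ x) by abel,
    trace_sub_smul_vecMulVec_mul_mul_transpose hsymm, hAu, dotProduct_comm (A⁻¹ *ᵥ x)]
  have hsub : f (M *ᵥ x) - f (Mstar *ᵥ x) ≤ g ⬝ᵥ ((M - Mstar) *ᵥ x) := by
    have := hg (Mstar *ᵥ x)
    rw [sub_mulVec, ← neg_sub (Mstar *ᵥ x), dotProduct_neg]
    linarith
  have hq : 0 ≤ x ⬝ᵥ (A⁻¹ *ᵥ x) := by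
    simpa using hA.inv.posSemidef.dotProduct_mulVec_nonneg x
  have := mul_le_mul_of_nonneg_left hsub (by positivity : 0 ≤ 2 * η)
  have := mul_le_mul_of_nonneg_right (mul_le_mul_of_nonneg_left hgρ (sq_nonneg η)) hq
  linarith

variable {m T : ℕ} {ℓ : Fin m → (κ → ℝ) → ℝ} {x : Fin m → ν → ℝ}
  {g : Matrix κ ν ℝ → Fin m → κ → ℝ} {A : Matrix ν ν ℝ} {η ρ : ℝ}

theorem sgd_sum_le_potential (hA : A.PosDef) (hη : 0 ≤ η)
    (hg : ∀ M i u, ℓ i (M *ᵥ x i) + g M i ⬝ᵥ (u - M *ᵥ x i) ≤ ℓ i u)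
    (hgρ : ∀ M i, g M i ⬝ᵥ g M i ≤ ρ ^ 2) (Wstar : Matrix κ ν ℝ) (ω : Fin T → Fin m)
    {W : ℕ → Matrix κ ν ℝ}
    (hW : ∀ t : Fin T, W (t + 1) = W t - η • vecMulVec (g (W t) (ω t)) (A⁻¹ *ᵥ x (ω t))) :
    ∑ t : Fin T, (2 * η * (ℓ (ω t) (W t *ᵥ x (ω t)) - ℓ (ω t) (Wstar *ᵥ x (ω t)))
        - η ^ 2 * ρ ^ 2 * (x (ω t) ⬝ᵥ (A⁻¹ *ᵥ x (ω t))))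
      ≤ ((W 0 - Wstar) * A * (W 0 - Wstar)ᵀ).trace := by
  set D : ℕ → ℝ := fun k => ((W k - Wstar) * A * (W k - Wstar)ᵀ).trace
  have hDT : 0 ≤ D T := by
    have := (hA.posSemidef.mul_mul_conjTranspose_same (W T - Wstar)).trace_nonneg
    rwa [conjTranspose_eq_transpose_of_trivial] at this
  calc _ ≤ ∑ t : Fin T, (D t - D (t + 1)) := Finset.sum_le_sum fun t _ => by
        simp only [D, hW t]
        exact sgd_step_le_potential_sub hA hη _ _ (hg _ _) (hgρ _ _)
    _ = D 0 - D T := by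
        rw [Fin.sum_univ_eq_sum_range (fun k => D k - D (k + 1)), Finset.sum_range_sub']
    _ ≤ D 0 := sub_le_self _ hDT

theorem sgd_expected_regret_le (hm : 0 < m) {L : Matrix κ ν ℝ → ℝ}
    (hL : ∀ M, L M = (1 / (m : ℝ)) * ∑ i, ℓ i (M *ᵥ x i)) (hA : A.PosDef)
    (hAsq : A * A = (1 / (m : ℝ)) • ∑ i, vecMulVec (x i) (x i)) (hη : 0 ≤ η)
    (hg : ∀ M i u, ℓ i (M *ᵥ x i) + g M i ⬝ᵥ (u - M *ᵥ x i) ≤ ℓ i u)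
    (hgρ : ∀ M i, g M i ⬝ᵥ g M i ≤ ρ ^ 2) (Wstar : Matrix κ ν ℝ)
    {W : (Fin T → Fin m) → ℕ → Matrix κ ν ℝ} (hW0 : ∀ ω, W ω 0 = 0)
    (hW : ∀ ω (t : Fin T),
      W ω (t + 1) = W ω t - η • vecMulVec (g (W ω t) (ω t)) (A⁻¹ *ᵥ x (ω t))) :
    2 * η * ∑ ω, ∑ t : Fin T, (L (W ω t) - L Wstar)
      ≤ (m : ℝ) ^ T * ((Wstar * A * Wstarᵀ).trace + T * η ^ 2 * ρ ^ 2 * A.trace) := by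
  have hm' : (m : ℝ) ≠ 0 := by positivity
  have htr := trace_eq_mul_sum_dotProduct_inv_mulVec hA.det_pos.ne'.isUnit hAsq
  have hadapt : ∀ t : Fin T, ∀ ω ω', (∀ s ≠ t, ω s = ω' s) → W ω t = W ω' t :=
    fun t ω ω' h =>
      eq_of_forall_lt_eq_of_recursion (fun M i => M - η • vecMulVec (g M i) (A⁻¹ *ᵥ x i)) 0
        hW0 hW t t.is_lt.le ω ω' fun s hs => h s (Fin.ne_of_lt hs)
  set G : Fin T → (Fin T → Fin m) → Fin m → ℝ := fun t ω i =>
    2 * η * (ℓ i (W ω t *ᵥ x i) - ℓ i (Wstar *ᵥ x i)) - η ^ 2 * ρ ^ 2 * (x i ⬝ᵥ (A⁻¹ *ᵥ x i))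
  have hmean : ∀ t ω,
      ∑ i, G t ω i = m * (2 * η * (L (W ω t) - L Wstar) - η ^ 2 * ρ ^ 2 * A.trace) := by
    intro t ω
    simp only [G, Finset.sum_sub_distrib, ← Finset.mul_sum, hL, htr]
    field_simp
  have hexp : ∀ t : Fin T, ∑ ω, G t ω (ω t)
      = ∑ ω, (2 * η * (L (W ω t) - L Wstar) - η ^ 2 * ρ ^ 2 * A.trace) := by
    intro t
    have := card_nsmul_sum_apply_eval_eq_sum_sum t (G t) fun ω ω' h => by
      simp only [G, hadapt t ω ω' h]
    rw [Fintype.card_fin, nsmul_eq_mul] at this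
    apply mul_left_cancel₀ hm'
    rw [this, Finset.mul_sum]
    exact Finset.sum_congr rfl fun ω _ => hmean t ω
  have hbound : ∑ ω, ∑ t, G t ω (ω t) ≤ (m : ℝ) ^ T * (Wstar * A * Wstarᵀ).trace := by
    calc _ ≤ ∑ ω : Fin T → Fin m, (Wstar * A * Wstarᵀ).trace :=
          Finset.sum_le_sum fun ω _ => by
            simpa only [hW0, zero_sub, transpose_neg, Matrix.neg_mul, Matrix.mul_neg, neg_neg]
              using sgd_sum_le_potential hA hη hg hgρ Wstar ω (hW ω)
      _ = (m : ℝ) ^ T * (Wstar * A * Wstarᵀ).trace := by simp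
  rw [Finset.sum_comm, Finset.sum_congr rfl fun t _ => hexp t, Finset.sum_comm] at hbound
  simp only [Finset.sum_sub_distrib, Finset.sum_const, Finset.card_univ, Fintype.card_fin,
    Fintype.card_fun, nsmul_eq_mul, ← Finset.mul_sum] at hbound ⊢
  push_cast at hbound ⊢
  linarith

theorem sgd_average_gap_le (hm : 0 < m) (hT : 0 < T) (hconv : ∀ i, ConvexOn ℝ Set.univ (ℓ i))
    {L : Matrix κ ν ℝ → ℝ} (hL : ∀ M, L M = (1 / (m : ℝ)) * ∑ i, ℓ i (M *ᵥ x i))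
    (hA : A.PosDef) (hAsq : A * A = (1 / (m : ℝ)) • ∑ i, vecMulVec (x i) (x i)) (hη : 0 ≤ η)
    (hg : ∀ M i u, ℓ i (M *ᵥ x i) + g M i ⬝ᵥ (u - M *ᵥ x i) ≤ ℓ i u)
    (hgρ : ∀ M i, g M i ⬝ᵥ g M i ≤ ρ ^ 2) (Wstar : Matrix κ ν ℝ)
    {W : (Fin T → Fin m) → ℕ → Matrix κ ν ℝ} (hW0 : ∀ ω, W ω 0 = 0)
    (hW : ∀ ω (t : Fin T),
      W ω (t + 1) = W ω t - η • vecMulVec (g (W ω t) (ω t)) (A⁻¹ *ᵥ x (ω t))) :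
    2 * η * T * ∑ ω, (L ((T : ℝ)⁻¹ • ∑ t : Fin T, W ω t) - L Wstar)
      ≤ (m : ℝ) ^ T * ((Wstar * A * Wstarᵀ).trace + T * η ^ 2 * ρ ^ 2 * A.trace) := by
  refine le_trans ?_ (sgd_expected_regret_le hm hL hA hAsq hη hg hgρ Wstar hW0 hW)
  rw [mul_assoc, Finset.mul_sum]
  gcongr with ω
  have hjensen := mul_le_mul_of_nonneg_left
    ((convexOn_of_eq_mean_comp_mulVec hconv hL).map_inv_smul_sum_le hT fun t : Fin T => W ω t)
    (Nat.cast_nonneg (α := ℝ) T)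
  rw [mul_inv_cancel_left₀ (by positivity)] at hjensen
  rw [Finset.sum_sub_distrib, Finset.sum_const, Finset.card_univ, Fintype.card_fin,
    nsmul_eq_mul, mul_sub]
  linarith

end SGD

theorem stmt4_general {n p m : ℕ} (hm : 0 < m)
    (x : Fin m → Fin n → ℝ) (ρ : ℝ) (hρ : 0 < ρ)
    (ℓ : Fin m → (Fin p → ℝ) → ℝ)
    (hconv : ∀ i, ConvexOn ℝ Set.univ (ℓ i))
    (hlip : ∀ i, ∀ u v : Fin p → ℝ,
      |ℓ i u - ℓ i v| ≤ ρ * Real.sqrt (∑ j, (u j - v j) ^ 2))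
    (L : Matrix (Fin p) (Fin n) ℝ → ℝ)
    (hL : ∀ W, L W = (1 / (m : ℝ)) * ∑ i, ℓ i (W *ᵥ x i))
    (Wstar : Matrix (Fin p) (Fin n) ℝ)
    (σ : ℝ)
    (hσ : ∀ v : Fin n → ℝ,
      Real.sqrt (∑ j, ((Wstar *ᵥ v) j) ^ 2) ≤ σ * Real.sqrt (∑ i, (v i) ^ 2))
    (C : Matrix (Fin n) (Fin n) ℝ)
    (hC : C = (1 / (m : ℝ)) • ∑ i, Matrix.vecMulVec (x i) (x i))
    (A : Matrix (Fin n) (Fin n) ℝ)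
    (hA : A.PosDef) (hAsq : A * A = C)  -- `A = C^{1/2}`
    (T : ℕ) (hT : 0 < T)
    (η : ℝ) (hη : η = σ / (ρ * Real.sqrt T))
    (g : Matrix (Fin p) (Fin n) ℝ → Fin m → (Fin p → ℝ))
    (hg : ∀ W i, ∀ u : Fin p → ℝ,
      ℓ i (W *ᵥ x i) + ∑ j, g W i j * (u j - (W *ᵥ x i) j) ≤ ℓ i u)
    (W : (Fin T → Fin m) → ℕ → Matrix (Fin p) (Fin n) ℝ)
    (hW0 : ∀ ω, W ω 0 = 0)
    (hWt : ∀ ω (t : Fin T),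
      W ω ((t : ℕ) + 1)
        = W ω (t : ℕ)
          - η • Matrix.vecMulVec (g (W ω (t : ℕ)) (ω t)) (A⁻¹ *ᵥ x (ω t))) :
    (∑ ω : Fin T → Fin m,
        (L ((T : ℝ)⁻¹ • ∑ t : Fin T, W ω (t : ℕ)) - L Wstar)) / (m : ℝ) ^ T
      ≤ (σ * ρ / Real.sqrt T) * A.trace := by
  rcases Nat.eq_zero_or_pos n with rfl | hn
  · simp [Subsingleton.elim _ Wstar, Matrix.trace]
  have hWstar := dotProduct_mulVec_self_le_of_sqrt_le hσ
  have hσ0 : 0 ≤ σ := nonneg_of_mul_nonneg_left ((Real.sqrt_nonneg _).trans (hσ fun _ => 1))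
    (Real.sqrt_pos.mpr (by simpa using hn))
  rcases hσ0.eq_or_lt with rfl | hσpos
  · have hWstar0 : Wstar = 0 := ext_iff_mulVec.mpr fun v => by
      rw [zero_mulVec, ← dotProduct_self_eq_zero]
      exact le_antisymm (by simpa using hWstar v) (dotProduct_self_star_nonneg _)
    have hWzero := eq_of_recursion_of_step_eq_self
      (fun M i => M - η • vecMulVec (g M i) (A⁻¹ *ᵥ x i)) 0 hW0 hWt fun M i => by
        rw [hη, zero_div, zero_smul, sub_zero]
    simp [hWzero _ _ (Fin.is_lt _).le, hWstar0]
  have hηpos : 0 < η := by rw [hη]; positivity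
  have hTη : (T : ℝ) * η ^ 2 * ρ ^ 2 = σ ^ 2 := by
    rw [hη, div_pow, mul_pow, Real.sq_sqrt (Nat.cast_nonneg T)]
    field_simp
  have hηT : η * T * (σ * ρ / √T) = σ ^ 2 := by
    rw [hη]
    field_simp
    rw [Real.sq_sqrt (Nat.cast_nonneg T)]
  have hgap := sgd_average_gap_le hm hT hconv hL hA (hAsq.trans hC) hηpos.le hg
    (fun M i => dotProduct_self_le_sq_of_subgradient (hlip i) (hg M i)) Wstar hW0 hWt
  rw [hTη] at hgap
  have hD0 := hA.posSemidef.trace_mul_mul_transpose_le hWstar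
  rw [div_le_iff₀ (by positivity)]
  refine le_of_mul_le_mul_left ?_ (by positivity : (0 : ℝ) < 2 * η * T)
  linear_combination hgap + (m : ℝ) ^ T * hD0 - 2 * A.trace * (m : ℝ) ^ T * hηT

/-- Theorem 1 of the paper. Conditioned SGD with the conditioner
`A = C^{1/2}` (the positive definite square root of the positive definite
correlation matrix `C`) and learning rate `η = σ/(ρ√T)`, where `σ ≥ ‖W*‖_spectral`,
satisfies `E[L(W̄) − L(W*)] ≤ (σρ/√T) tr(C^{1/2})`. -/
theorem stmt4 {n p m : ℕ} (hm : 0 < m)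
    (x : Fin m → Fin n → ℝ) (ρ : ℝ) (hρ : 0 < ρ)
    (ℓ : Fin m → (Fin p → ℝ) → ℝ)
    (hconv : ∀ i, ConvexOn ℝ Set.univ (ℓ i))
    (hlip : ∀ i, ∀ u v : Fin p → ℝ,
      |ℓ i u - ℓ i v| ≤ ρ * Real.sqrt (∑ j, (u j - v j) ^ 2))
    (L : Matrix (Fin p) (Fin n) ℝ → ℝ)
    (hL : ∀ W, L W = (1 / (m : ℝ)) * ∑ i, ℓ i (W *ᵥ x i))
    (Wstar : Matrix (Fin p) (Fin n) ℝ)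
    (hWstar : ∀ W, L Wstar ≤ L W)
    (σ : ℝ)
    (hσ : ∀ v : Fin n → ℝ,
      Real.sqrt (∑ j, ((Wstar *ᵥ v) j) ^ 2) ≤ σ * Real.sqrt (∑ i, (v i) ^ 2))
    (C : Matrix (Fin n) (Fin n) ℝ)
    (hC : C = (1 / (m : ℝ)) • ∑ i, Matrix.vecMulVec (x i) (x i))
    (hCpd : C.PosDef)
    (A : Matrix (Fin n) (Fin n) ℝ)
    (hA : A.PosDef) (hAsq : A * A = C)  -- `A = C^{1/2}`
    (T : ℕ) (hT : 0 < T)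
    (η : ℝ) (hη : η = σ / (ρ * Real.sqrt T))
    (g : Matrix (Fin p) (Fin n) ℝ → Fin m → (Fin p → ℝ))
    (hg : ∀ W i, ∀ u : Fin p → ℝ,
      ℓ i (W *ᵥ x i) + ∑ j, g W i j * (u j - (W *ᵥ x i) j) ≤ ℓ i u)
    (W : (Fin T → Fin m) → ℕ → Matrix (Fin p) (Fin n) ℝ)
    (hW0 : ∀ ω, W ω 0 = 0)
    (hWt : ∀ ω (t : Fin T),
      W ω ((t : ℕ) + 1)
        = W ω (t : ℕ)
          - η • Matrix.vecMulVec (g (W ω (t : ℕ)) (ω t)) (A⁻¹ *ᵥ x (ω t))) :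
    (∑ ω : Fin T → Fin m,
        (L ((T : ℝ)⁻¹ • ∑ t : Fin T, W ω (t : ℕ)) - L Wstar)) / (m : ℝ) ^ T
      ≤ (σ * ρ / Real.sqrt T) * A.trace :=
  stmt4_general hm x ρ hρ ℓ hconv hlip L hL Wstar σ hσ C hC A hA hAsq T hT η hη g hg W hW0 hWt
end

section
/- Let k < n, let Q ∈ ℝ^{n×k} satisfy QᵀQ = I_k, let B ∈ ℝ^{k×k} be symmetric positive definite, and let C ∈ ℝ^{n×n} be symmetric positive semidefinite with tr(C) > tr(C̃), where C̃ = Qᵀ C Q. Set a = √((tr(C) − tr(C̃))/(n−k)) and A = Q B Qᵀ + a(I − QQᵀ). Then tr(A) + tr(A⁻¹ C) = tr(B) + tr(B⁻¹ C̃) + 2√((n−k)(tr(C) − tr(C̃))). -/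
open Matrix BigOperators

/-!
With `P = 1 - QQᵀ` the projector onto the complement of the range of `Q`, the conditioner is
`A = QBQᵀ + aP` and its inverse is `QB⁻¹Qᵀ + a⁻¹P`, because `QQᵀ` and `P` are complementary
orthogonal projectors. Taking traces against `1` and against `C` splits each side into the
sketched part (`tr B`, `tr(B⁻¹C̃)`) and the complementary part `a(n - k) + a⁻¹(tr C - tr C̃)`;
the choice of `a` balances the two terms of the latter (AM-GM with equality), each being
`√((n - k)(tr C - tr C̃))`.
-/

namespace Matrix

variable {m n R : Type*} [Fintype m] [Fintype n] [DecidableEq n]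

def sketched [CommRing R] (Q : Matrix n m R) (B : Matrix m m R) (a : R) : Matrix n n R :=
  Q * B * Qᵀ + a • (1 - Q * Qᵀ)

section CommRing

variable [CommRing R] (Q : Matrix n m R)

theorem trace_sketched_mul (X : Matrix m m R) (b : R) (C : Matrix n n R) :
    (sketched Q X b * C).trace = (X * (Qᵀ * C * Q)).trace + b * (C.trace - (Qᵀ * C * Q).trace) := by
  have hX : (Q * X * Qᵀ * C).trace = (X * (Qᵀ * C * Q)).trace := by
    simp only [Matrix.mul_assoc]
    rw [trace_mul_comm]
    simp only [Matrix.mul_assoc]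
  have hP : (Q * Qᵀ * C).trace = (Qᵀ * C * Q).trace := by
    rw [Matrix.mul_assoc, trace_mul_comm]
  rw [sketched, add_mul, smul_mul_assoc, trace_add, trace_smul, smul_eq_mul, Matrix.sub_mul,
    Matrix.one_mul, trace_sub, hX, hP]

variable [DecidableEq m] {Q} (hQ : Qᵀ * Q = 1)
include hQ

theorem trace_sketched (B : Matrix m m R) (a : R) :
    (sketched Q B a).trace = B.trace + a * ((Fintype.card n : R) - Fintype.card m) := by
  rw [← Matrix.mul_one (sketched Q B a), trace_sketched_mul, Matrix.mul_one, hQ, Matrix.mul_one,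
    trace_one, trace_one]

theorem one_sub_mul_transpose_mul_eq_zero : (1 - Q * Qᵀ) * Q = 0 := by
  rw [Matrix.sub_mul, Matrix.one_mul, Matrix.mul_assoc, hQ, Matrix.mul_one, sub_self]

theorem transpose_mul_one_sub_mul_transpose_eq_zero : Qᵀ * (1 - Q * Qᵀ) = 0 := by
  rw [Matrix.mul_sub, Matrix.mul_one, ← Matrix.mul_assoc, hQ, Matrix.one_mul, sub_self]

theorem isIdempotentElem_one_sub_mul_transpose : IsIdempotentElem (1 - Q * Qᵀ) := by
  rw [IsIdempotentElem, Matrix.mul_sub, Matrix.mul_one, ← Matrix.mul_assoc,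
    one_sub_mul_transpose_mul_eq_zero hQ, Matrix.zero_mul, sub_zero]

theorem sketched_mul_sketched (B B' : Matrix m m R) (a a' : R) :
    sketched Q B a * sketched Q B' a' = Q * (B * B') * Qᵀ + (a * a') • (1 - Q * Qᵀ) := by
  have hQQ : Q * B * Qᵀ * (Q * B' * Qᵀ) = Q * (B * B') * Qᵀ := by
    simp only [Matrix.mul_assoc]
    rw [← Matrix.mul_assoc Qᵀ Q, hQ, Matrix.one_mul]
  have hQP : Q * B * Qᵀ * (1 - Q * Qᵀ) = 0 := by
    rw [Matrix.mul_assoc, transpose_mul_one_sub_mul_transpose_eq_zero hQ, Matrix.mul_zero]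
  have hPQ : (1 - Q * Qᵀ) * (Q * B' * Qᵀ) = 0 := by
    rw [← Matrix.mul_assoc, ← Matrix.mul_assoc, one_sub_mul_transpose_mul_eq_zero hQ,
      Matrix.zero_mul, Matrix.zero_mul]
  simp only [sketched, add_mul, mul_add, smul_mul_assoc, mul_smul_comm, hQQ, hQP, hPQ,
    (isIdempotentElem_one_sub_mul_transpose hQ).eq, smul_zero, add_zero, zero_add, smul_smul,
    mul_comm a']

end CommRing

theorem inv_sketched {K : Type*} [Field K] [DecidableEq m] {Q : Matrix n m K} (hQ : Qᵀ * Q = 1)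
    {B : Matrix m m K} (hB : IsUnit B.det) {a : K} (ha : a ≠ 0) :
    (sketched Q B a)⁻¹ = sketched Q B⁻¹ a⁻¹ := by
  apply inv_eq_right_inv
  rw [sketched_mul_sketched hQ, mul_nonsing_inv B hB, mul_inv_cancel₀ ha, Matrix.mul_one,
    one_smul, add_sub_cancel]

end Matrix

theorem Real.sqrt_div_mul_add_inv_mul {m d : ℝ} (hm : 0 < m) (hd : 0 < d) :
    √(d / m) * m + (√(d / m))⁻¹ * d = 2 * √(m * d) := by
  set s := √(d / m)
  have hs0 : 0 < s := Real.sqrt_pos.mpr (div_pos hd hm)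
  have hss : s * s = d / m := Real.mul_self_sqrt (div_pos hd hm).le
  have hsm : s * m = √(m * d) := by
    rw [eq_comm, Real.sqrt_eq_iff_mul_self_eq_of_pos (mul_pos hs0 hm), mul_mul_mul_comm, hss]
    field_simp
  have hinv : s⁻¹ * d = s * m := by
    rw [inv_mul_eq_iff_eq_mul₀ hs0.ne', ← mul_assoc, hss, div_mul_cancel₀ _ hm.ne']
  rw [hinv, hsm]
  ring

theorem stmt10_general {n k : ℕ} (hk : k < n)
    (Q : Matrix (Fin n) (Fin k) ℝ) (hQ : Qᵀ * Q = 1)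
    (B : Matrix (Fin k) (Fin k) ℝ) (hB : B.PosDef)
    (C : Matrix (Fin n) (Fin n) ℝ)
    (Ct : Matrix (Fin k) (Fin k) ℝ) (hCt : Ct = Qᵀ * C * Q)
    (htr : Ct.trace < C.trace)
    (a : ℝ) (ha : a = Real.sqrt ((C.trace - Ct.trace) / ((n : ℝ) - (k : ℝ))))
    (A : Matrix (Fin n) (Fin n) ℝ)
    (hA : A = Q * B * Qᵀ + a • (1 - Q * Qᵀ)) :
    A.trace + (A⁻¹ * C).trace
      = B.trace + (B⁻¹ * Ct).trace
        + 2 * Real.sqrt (((n : ℝ) - (k : ℝ)) * (C.trace - Ct.trace)) := by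
  have hnk : (0 : ℝ) < (n : ℝ) - (k : ℝ) := sub_pos.mpr (by exact_mod_cast hk)
  have hgap : (0 : ℝ) < C.trace - Ct.trace := sub_pos.mpr htr
  have ha0 : a ≠ 0 := by
    rw [ha]
    exact (Real.sqrt_pos.mpr (div_pos hgap hnk)).ne'
  change A = sketched Q B a at hA
  rw [hA, inv_sketched hQ hB.det_pos.ne'.isUnit ha0,
    trace_sketched hQ, trace_sketched_mul, ← hCt, Fintype.card_fin, Fintype.card_fin,
    ← Real.sqrt_div_mul_add_inv_mul hnk hgap, ← ha]
  ring

/-- Theorem 2 of the paper, key identity. With `QᵀQ = I`,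
`B` symmetric positive definite, `C` symmetric PSD, `C̃ = Qᵀ C Q`,
`tr(C) > tr(C̃)`, and `a = √((tr(C) − tr(C̃))/(n−k))`, the sketched conditioner
`A = Q B Qᵀ + a (I − Q Qᵀ)` satisfies
`tr(A) + tr(A⁻¹ C) = tr(B) + tr(B⁻¹ C̃) + 2√((n−k)(tr(C) − tr(C̃)))`. -/
theorem stmt10 {n k : ℕ} (hk : k < n)
    (Q : Matrix (Fin n) (Fin k) ℝ) (hQ : Qᵀ * Q = 1)
    (B : Matrix (Fin k) (Fin k) ℝ) (hB : B.PosDef)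
    (C : Matrix (Fin n) (Fin n) ℝ) (hC : C.PosSemidef)
    (Ct : Matrix (Fin k) (Fin k) ℝ) (hCt : Ct = Qᵀ * C * Q)
    (htr : Ct.trace < C.trace)
    (a : ℝ) (ha : a = Real.sqrt ((C.trace - Ct.trace) / ((n : ℝ) - (k : ℝ))))
    (A : Matrix (Fin n) (Fin n) ℝ)
    (hA : A = Q * B * Qᵀ + a • (1 - Q * Qᵀ)) :
    A.trace + (A⁻¹ * C).trace
      = B.trace + (B⁻¹ * Ct).trace
        + 2 * Real.sqrt (((n : ℝ) - (k : ℝ)) * (C.trace - Ct.trace)) :=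
  stmt10_general hk Q hQ B hB C Ct hCt htr a ha A hA
end
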